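/- Let F be a positive contraction on a complex Hilbert space (0 ≤ F ≤ I) and F_q an increasing net/sequence of positive operators with F_q → I in the strong operator topology and F_q ≤ I. Then for any ε > 0, the spectral projections P_q = P^{F_q}((1 − ε, 1]) converge to I in the strong operator topology. -/

import Mathlib

/-- A projection-valued (spectral) measure for the operator `A`. -/
structure IsSpectralMeasure {H : Type*} [NormedAddCommGroup H] [InnerProductSpace ℂ H]
    [CompleteSpace H] (A : H →L[ℂ] H) (P : Set ℝ → H →L[ℂ] H) : Prop where
  isIdem : ∀ s, IsIdempotentElem (P s)
  selfAdj : ∀ s, IsSelfAdjoint (P s)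
  empty : P ∅ = 0
  univ : P Set.univ = 1
  inter : ∀ s t, P (s ∩ t) = P s * P t
  hasSum : ∀ (s : ℕ → Set ℝ), Pairwise (Function.onFun Disjoint s) →
    ∀ x, HasSum (fun n => P (s n) x) (P (⋃ n, s n) x)
  commutes : ∀ s, A * P s = P s * A
  smul_le : ∀ a b : ℝ, (a : ℂ) • P (Set.Ioc a b) ≤ P (Set.Ioc a b) * A * P (Set.Ioc a b)
  le_smul : ∀ a b : ℝ, P (Set.Ioc a b) * A * P (Set.Ioc a b) ≤ (b : ℂ) • P (Set.Ioc a b)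

/-!
Write `Q = P (1 - ε, 1]` and `R = P (-ε, 1 - ε]`. Since `0 ≤ A ≤ 1`, the spectral measure of `A`
vanishes on `(-∞, -ε]` and on `(1, ∞)`, so `R + Q = 1`. As `A` commutes with both projections,
`A = RAR + QAQ ≤ (1 - ε) R + Q`, that is `ε R ≤ 1 - A`. Evaluating the quadratic forms at `x` gives
`ε ‖x - Q x‖² ≤ re ⟪x - A x, x⟫ ≤ ‖x - A x‖ ‖x‖`, which tends to `0` when `A = F_q`.
-/

open Set Function Filter Topology

theorem ContinuousLinearMap.re_inner_le_re_inner_of_le {𝕜 E : Type*} [RCLike 𝕜]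
    [NormedAddCommGroup E] [InnerProductSpace 𝕜 E] {f g : E →L[𝕜] E} (h : f ≤ g) (x : E) :
    RCLike.re (inner 𝕜 (f x) x) ≤ RCLike.re (inner 𝕜 (g x) x) := by
  simpa [inner_sub_left] using ((ContinuousLinearMap.le_def f g).1 h).re_inner_nonneg_left x

theorem IsStarProjection.re_inner_apply_self {𝕜 E : Type*} [RCLike 𝕜] [NormedAddCommGroup E]
    [InnerProductSpace 𝕜 E] [CompleteSpace E] {Q : E →L[𝕜] E} (hQ : IsStarProjection Q) (x : E) :
    RCLike.re (inner 𝕜 (Q x) x) = ‖Q x‖ ^ 2 := by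
  have hQQ : Q (Q x) = Q x := congr($(hQ.isIdempotentElem.eq) x)
  have hsymm : inner 𝕜 (Q (Q x)) x = inner 𝕜 (Q x) (Q x) := hQ.isSelfAdjoint.isSymmetric _ _
  rw [← inner_self_eq_norm_sq (𝕜 := 𝕜), ← hsymm, hQQ]

theorem IsStarProjection.eq_zero_of_smul_nonpos {H : Type*} [NormedAddCommGroup H]
    [InnerProductSpace ℂ H] [CompleteSpace H] {Q : H →L[ℂ] H} (hQ : IsStarProjection Q) {c : ℝ}
    (hc : 0 < c) (h : (c : ℂ) • Q ≤ 0) : Q = 0 := by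
  refine le_antisymm ?_ hQ.nonneg
  simpa [smul_smul, hc.ne'] using smul_le_smul_of_nonneg_left h (inv_nonneg.2 hc.le)

namespace IsSpectralMeasure

variable {H : Type*} [NormedAddCommGroup H] [InnerProductSpace ℂ H] [CompleteSpace H]
  {A : H →L[ℂ] H} {P : Set ℝ → H →L[ℂ] H}

theorem isStarProjection (M : IsSpectralMeasure A P) (s : Set ℝ) : IsStarProjection (P s) :=
  ⟨M.isIdem s, M.selfAdj s⟩

theorem mul_eq_zero_of_disjoint (M : IsSpectralMeasure A P) {s t : Set ℝ} (hst : Disjoint s t) :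
    P s * P t = 0 := by
  rw [← M.inter, hst.inter_eq, M.empty]

theorem union_eq_add (M : IsSpectralMeasure A P) {s t : Set ℝ} (hst : Disjoint s t) :
    P (s ∪ t) = P s + P t := by
  let S : ℕ → Set ℝ := fun n => if n = 0 then s else if n = 1 then t else ∅
  have hS : Pairwise (Disjoint on S) := by
    rintro (_ | _ | i) (_ | _ | j) hij <;> simp_all [S, onFun, hst.symm]
  have hU : ⋃ n, S n = s ∪ t := by
    ext x
    simp only [mem_iUnion, mem_union, S]
    constructor
    · rintro ⟨(_ | _ | n), hn⟩ <;> simp_all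
    · rintro (hx | hx)
      exacts [⟨0, by simpa⟩, ⟨1, by simpa⟩]
  ext x
  have hsum := M.hasSum S hS x
  rw [hU] at hsum
  have hfin : HasSum (fun n => P (S n) x) (∑ n ∈ Finset.range 2, P (S n) x) :=
    hasSum_sum_of_ne_finset_zero fun n hn => by
      obtain ⟨h0, h1⟩ : n ≠ 0 ∧ n ≠ 1 := by simp only [Finset.mem_range] at hn; omega
      simp [S, h0, h1, M.empty]
  simpa [Finset.sum_range_succ, S] using hsum.unique hfin

theorem eq_zero_of_subset (M : IsSpectralMeasure A P) {s t : Set ℝ} (hts : t ⊆ s)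
    (hs : P s = 0) : P t = 0 := by
  rw [← inter_eq_left.2 hts, M.inter, hs, mul_zero]

theorem iUnion_eq_zero (M : IsSpectralMeasure A P) {S : ℕ → Set ℝ} (hS : ∀ n, P (S n) = 0) :
    P (⋃ n, S n) = 0 := by
  ext x
  rw [← iUnion_disjointed]
  refine (M.hasSum _ (disjoint_disjointed S) x).unique ?_
  simp [M.eq_zero_of_subset (disjointed_subset S _) (hS _)]

theorem Iic_eq_zero (M : IsSpectralMeasure A P) {c : ℝ} (h : ∀ a, P (Ioc a c) = 0) :
    P (Iic c) = 0 := by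
  have hU : Iic c = ⋃ n : ℕ, Ioc (c - n) c := by
    ext x
    simp only [mem_Iic, mem_iUnion, mem_Ioc]
    refine ⟨fun hx => ?_, fun ⟨_, _, hx⟩ => hx⟩
    obtain ⟨n, hn⟩ := exists_nat_gt (c - x)
    exact ⟨n, by linarith, hx⟩
  rw [hU]
  exact M.iUnion_eq_zero fun n => h _

theorem Ioi_eq_zero (M : IsSpectralMeasure A P) {c : ℝ} (h : ∀ a b, c < a → P (Ioc a b) = 0) :
    P (Ioi c) = 0 := by
  have hU : Ioi c = ⋃ m : ℕ, ⋃ n : ℕ, Ioc (c + 1 / (m + 1)) n := by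
    ext x
    simp only [mem_Ioi, mem_iUnion, mem_Ioc]
    constructor
    · intro hx
      obtain ⟨m, hm⟩ := exists_nat_one_div_lt (sub_pos.2 hx)
      obtain ⟨n, hn⟩ := exists_nat_ge x
      exact ⟨m, n, by linarith, hn⟩
    · rintro ⟨m, n, hx, -⟩
      have : (0 : ℝ) < 1 / (m + 1) := by positivity
      linarith
  rw [hU]
  refine M.iUnion_eq_zero fun m => M.iUnion_eq_zero fun n => h _ _ ?_
  have : (0 : ℝ) < 1 / (m + 1) := by positivity
  linarith

theorem Ioc_eq_zero_of_le_one (M : IsSpectralMeasure A P) (hA : A ≤ 1) {a b : ℝ} (ha : 1 < a) :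
    P (Ioc a b) = 0 := by
  set Q := P (Ioc a b)
  have hQAQ : Q * A * Q ≤ Q := by
    simpa [(M.isIdem _).eq] using (M.selfAdj (Ioc a b)).conjugate_le_conjugate hA
  refine (M.isStarProjection _).eq_zero_of_smul_nonpos (sub_pos.2 ha) ?_
  simpa [sub_smul] using (M.smul_le a b).trans hQAQ

theorem Ioc_eq_zero_of_nonneg (M : IsSpectralMeasure A P) (hA : 0 ≤ A) {a b : ℝ} (hb : b < 0) :
    P (Ioc a b) = 0 := by
  set Q := P (Ioc a b)
  have hQAQ : 0 ≤ Q * A * Q := (M.selfAdj (Ioc a b)).conjugate_nonneg hA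
  refine (M.isStarProjection _).eq_zero_of_smul_nonpos (neg_pos.2 hb) ?_
  simpa using hQAQ.trans (M.le_smul a b)

theorem Ioc_add_Ioc_eq_one (M : IsSpectralMeasure A P) (hA₀ : 0 ≤ A) (hA₁ : A ≤ 1) {a b : ℝ}
    (ha : a < 0) (hab : a ≤ b) (hb : b ≤ 1) : P (Ioc a b) + P (Ioc b 1) = 1 := by
  have hlow : P (Iic a) = 0 :=
    M.Iic_eq_zero fun _ => M.Ioc_eq_zero_of_nonneg hA₀ ha
  have hhigh : P (Ioi 1) = 0 :=
    M.Ioi_eq_zero fun _ _ h => M.Ioc_eq_zero_of_le_one hA₁ h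
  rw [← M.univ, ← Iic_union_Ioi (a := (1 : ℝ)), M.union_eq_add (Iic_disjoint_Ioi le_rfl), hhigh,
    add_zero, ← Iic_union_Ioc_eq_Iic hb, M.union_eq_add (Iic_disjoint_Ioc le_rfl),
    ← Iic_union_Ioc_eq_Iic hab, M.union_eq_add (Iic_disjoint_Ioc le_rfl), hlow, zero_add]

theorem smul_Ioc_le_one_sub (M : IsSpectralMeasure A P) (hA₀ : 0 ≤ A) (hA₁ : A ≤ 1) {ε : ℝ}
    (hε : 0 < ε) : (ε : ℂ) • P (Ioc (-ε) (1 - ε)) ≤ 1 - A := by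
  set R := P (Ioc (-ε) (1 - ε))
  set Q := P (Ioc (1 - ε) 1)
  have hRQ : R + Q = 1 := M.Ioc_add_Ioc_eq_one hA₀ hA₁ (by linarith) (by linarith) (by linarith)
  have hRQ₀ : R * Q = 0 := M.mul_eq_zero_of_disjoint (Ioc_disjoint_Ioc_of_le le_rfl)
  have hQR₀ : Q * R = 0 := M.mul_eq_zero_of_disjoint (Ioc_disjoint_Ioc_of_le le_rfl).symm
  have hAR : A * R = R * A := M.commutes _
  have hAQ : A * Q = Q * A := M.commutes _
  have hA : A = R * A * R + Q * A * Q := by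
    calc A = (R + Q) * A * (R + Q) := by rw [hRQ, one_mul, mul_one]
      _ = R * A * R + Q * A * Q + R * (A * Q) + Q * (A * R) := by noncomm_ring
      _ = R * A * R + Q * A * Q := by
        rw [hAQ, hAR, ← mul_assoc, ← mul_assoc, hRQ₀, hQR₀, zero_mul, add_zero, add_zero]
  have hR : R * A * R ≤ ((1 - ε : ℝ) : ℂ) • R := M.le_smul _ _
  have hQ : Q * A * Q ≤ Q := by
    simpa [(M.isIdem _).eq] using (M.selfAdj (Ioc (1 - ε) 1)).conjugate_le_conjugate hA₁
  calc (ε : ℂ) • R = (R + Q) - (((1 - ε : ℝ) : ℂ) • R + Q) := by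
        push_cast
        rw [sub_smul, one_smul]
        abel
    _ ≤ (R + Q) - (R * A * R + Q * A * Q) := sub_le_sub_left (add_le_add hR hQ) _
    _ = 1 - A := by rw [hRQ, ← hA]

theorem mul_norm_sub_apply_sq_le (M : IsSpectralMeasure A P) (hA₀ : 0 ≤ A) (hA₁ : A ≤ 1)
    {ε : ℝ} (hε : 0 < ε) (x : H) :
    ε * ‖x - P (Ioc (1 - ε) 1) x‖ ^ 2 ≤ ‖x - A x‖ * ‖x‖ := by
  have hcompl : x - P (Ioc (1 - ε) 1) x = P (Ioc (-ε) (1 - ε)) x := by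
    rw [sub_eq_iff_eq_add, ← add_apply,
      M.Ioc_add_Ioc_eq_one hA₀ hA₁ (by linarith) (by linarith) (by linarith),
      one_apply_eq_self]
  calc ε * ‖x - P (Ioc (1 - ε) 1) x‖ ^ 2
      = RCLike.re (inner ℂ (((ε : ℂ) • P (Ioc (-ε) (1 - ε))) x) x) := by
        rw [hcompl, smul_apply, inner_smul_left, Complex.conj_ofReal,
          ← (M.isStarProjection _).re_inner_apply_self]
        exact (Complex.re_ofReal_mul ε _).symm
    _ ≤ RCLike.re (inner ℂ ((1 - A) x) x) :=
      ContinuousLinearMap.re_inner_le_re_inner_of_le (M.smul_Ioc_le_one_sub hA₀ hA₁ hε) x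
    _ ≤ ‖x - A x‖ * ‖x‖ := by
      rw [sub_apply, one_apply_eq_self]
      exact re_inner_le_norm _ _

end IsSpectralMeasure

theorem spectral_proj_tendsto_one_general {H : Type*} [NormedAddCommGroup H]
    [InnerProductSpace ℂ H] [CompleteSpace H]
    (Fq : ℕ → H →L[ℂ] H)
    (hpos : ∀ q, 0 ≤ Fq q) (hle : ∀ q, Fq q ≤ 1)
    (htends : ∀ x : H, Filter.Tendsto (fun q => Fq q x) Filter.atTop (nhds x))
    (P : ℕ → Set ℝ → H →L[ℂ] H) (hP : ∀ q, IsSpectralMeasure (Fq q) (P q))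
    (ε : ℝ) (hε : 0 < ε) :
    ∀ x : H, Filter.Tendsto (fun q => P q (Set.Ioc (1 - ε) 1) x) Filter.atTop (nhds x) := by
  intro x
  have hbound (q : ℕ) : ‖x - P q (Ioc (1 - ε) 1) x‖ ^ 2 ≤ ‖x - Fq q x‖ * ‖x‖ / ε := by
    rw [le_div_iff₀' hε]
    exact (hP q).mul_norm_sub_apply_sq_le (hpos q) (hle q) hε x
  have hFq : Tendsto (fun q => ‖x - Fq q x‖ * ‖x‖ / ε) atTop (𝓝 0) := by
    simpa [norm_sub_rev] using
      ((tendsto_iff_norm_sub_tendsto_zero.1 (htends x)).mul_const ‖x‖).div_const ε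
  have hsq : Tendsto (fun q => ‖x - P q (Ioc (1 - ε) 1) x‖ ^ 2) atTop (𝓝 0) :=
    squeeze_zero (fun _ => by positivity) hbound hFq
  rw [tendsto_iff_norm_sub_tendsto_zero]
  simpa [norm_sub_rev] using hsq.sqrt

/-- If positive contractions `F_q` increase strongly to the identity, the spectral
projections `P_q = P^{F_q}((1-ε,1])` converge strongly to the identity. -/
theorem spectral_proj_tendsto_one {H : Type*} [NormedAddCommGroup H]
    [InnerProductSpace ℂ H] [CompleteSpace H]
    (F : H →L[ℂ] H) (hFpos : 0 ≤ F) (hFle : F ≤ 1)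
    (Fq : ℕ → H →L[ℂ] H) (hmono : Monotone Fq)
    (hpos : ∀ q, 0 ≤ Fq q) (hle : ∀ q, Fq q ≤ 1)
    (htends : ∀ x : H, Filter.Tendsto (fun q => Fq q x) Filter.atTop (nhds x))
    (P : ℕ → Set ℝ → H →L[ℂ] H) (hP : ∀ q, IsSpectralMeasure (Fq q) (P q))
    (ε : ℝ) (hε : 0 < ε) :
    ∀ x : H, Filter.Tendsto (fun q => P q (Set.Ioc (1 - ε) 1) x) Filter.atTop (nhds x) :=
  spectral_proj_tendsto_one_general Fq hpos hle htends P hP ε hε
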